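/- arXiv:2401.04683 — 2 statements merged into one kernel-verified Lean document; each statement's English description precedes it below -/
import Mathlib

section
/- Let G be any finite simple graph and G' the graph obtained by attaching a whisker at every vertex of G. Then the closed neighborhood ideal NI(G') is minimally generated by the monomials xᵢyᵢ for i = 1,…,n; in particular NI(G') = ⟨x₁y₁,…,xₙyₙ⟩. -/
open MvPolynomial

variable {V : Type*}

/-- A finite matching of a simple graph: a finset of edges that are pairwise disjoint. -/
def SimpleGraph.IsMatchingFinset (G : SimpleGraph V) (M : Finset (Sym2 V)) : Prop :=
  (∀ e ∈ M, e ∈ G.edgeSet) ∧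
    ∀ e ∈ M, ∀ f ∈ M, e ≠ f → ∀ v : V, v ∈ e → v ∉ f

/-- The matching number: maximum size of a matching. -/
noncomputable def SimpleGraph.matchingNumber (G : SimpleGraph V) : ℕ :=
  sSup {n | ∃ M : Finset (Sym2 V), G.IsMatchingFinset M ∧ M.card = n}


/-- The closed neighborhood ideal of a graph: generated by the monomials
`∏_{v ∈ N[w]} X v` over all vertices `w`. -/
noncomputable def closedNbhdIdeal (K : Type*) [Field K] (G : SimpleGraph V)
    [Fintype V] [DecidableEq V] [DecidableRel G.Adj] : Ideal (MvPolynomial V K) :=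
  Ideal.span {m | ∃ w : V, m = ∏ v ∈ insert w (G.neighborFinset w), X v}


/-- The graph obtained from `G` by attaching a whisker at every vertex:
the vertex `Sum.inl a` is the original vertex `xₐ` and `Sum.inr a` is the new
pendant vertex `yₐ` attached to it. -/
def whisker (G : SimpleGraph V) : SimpleGraph (V ⊕ V) :=
  SimpleGraph.fromRel (fun p q =>
    (∃ a b : V, p = Sum.inl a ∧ q = Sum.inl b ∧ G.Adj a b) ∨
      (∃ a : V, p = Sum.inl a ∧ q = Sum.inr a))

/-! Every closed neighbourhood in the whiskered graph contains a whisker `{xₐ, yₐ}`, and the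
closed neighbourhood of the leaf `yₐ` is exactly that whisker; so the generators of `NI(G')` are
multiples of the `xₐyₐ`, which are themselves generators. Minimality: evaluating at the point
with `xᵢ = yᵢ = 1` and all other variables `0` kills every `xⱼyⱼ` with `j ≠ i` but not `xᵢyᵢ`. -/

theorem Ideal.span_le_span_of_forall_dvd {R : Type*} [CommSemiring R] {S T : Set R}
    (h : ∀ s ∈ S, ∃ t ∈ T, t ∣ s) : Ideal.span S ≤ Ideal.span T :=
  Ideal.span_le.2 fun s hs =>
    let ⟨_, ht, hts⟩ := h s hs
    Ideal.mem_of_dvd _ hts (Ideal.subset_span ht)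

theorem MvPolynomial.notMem_span_of_eval_ne_zero {σ R : Type*} [CommSemiring R] (x : σ → R)
    {S : Set (MvPolynomial σ R)} (hS : ∀ s ∈ S, eval x s = 0) {p : MvPolynomial σ R}
    (hp : eval x p ≠ 0) : p ∉ Ideal.span S := fun hmem =>
  hp <| (Ideal.span_le (I := RingHom.ker (eval x))).2 hS hmem

namespace whisker

variable (G : SimpleGraph V)

theorem adj_inl_inr (a : V) : (whisker G).Adj (Sum.inl a) (Sum.inr a) := by
  simp [whisker]

theorem adj_inr_iff (a : V) (q : V ⊕ V) : (whisker G).Adj (Sum.inr a) q ↔ q = Sum.inl a := by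
  simp only [whisker, SimpleGraph.fromRel_adj]
  aesop

variable [Fintype V] [DecidableRel (whisker G).Adj]

theorem neighborFinset_inr (a : V) : (whisker G).neighborFinset (Sum.inr a) = {Sum.inl a} := by
  ext q
  simp [adj_inr_iff]

theorem exists_pair_subset_closedNbhd [DecidableEq V] (w : V ⊕ V) :
    ∃ a, {Sum.inl a, Sum.inr a} ⊆ insert w ((whisker G).neighborFinset w) := by
  cases w with
  | inl a => exact ⟨a, by simp [Finset.insert_subset_iff, adj_inl_inr]⟩
  | inr a => exact ⟨a, by simp [Finset.insert_subset_iff, adj_inr_iff]⟩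

end whisker

theorem closedNbhdIdeal_whisker (K : Type*) [Field K] (G : SimpleGraph V)
    [Fintype V] [DecidableEq V] [DecidableRel (whisker G).Adj] :
    closedNbhdIdeal K (whisker G) =
      Ideal.span {m | ∃ i : V, m = X (Sum.inl i) * X (Sum.inr i)} ∧
    ∀ i : V, (X (Sum.inl i) * X (Sum.inr i) : MvPolynomial (V ⊕ V) K) ∉
      Ideal.span {m | ∃ j : V, j ≠ i ∧ m = X (Sum.inl j) * X (Sum.inr j)} := by
  refine ⟨le_antisymm ?_ ?_, fun i => ?_⟩
  · refine Ideal.span_le_span_of_forall_dvd ?_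
    rintro _ ⟨w, rfl⟩
    obtain ⟨a, ha⟩ := whisker.exists_pair_subset_closedNbhd G w
    refine ⟨_, ⟨a, rfl⟩, ?_⟩
    simpa using Finset.prod_dvd_prod_of_subset _ _ (X (R := K)) ha
  · refine Ideal.span_le_span_of_forall_dvd ?_
    rintro _ ⟨i, rfl⟩
    refine ⟨_, ⟨Sum.inr i, rfl⟩, dvd_of_eq ?_⟩
    simp [whisker.neighborFinset_inr, mul_comm]
  · refine notMem_span_of_eval_ne_zero (Sum.elim (Pi.single i 1) (Pi.single i 1)) ?_ (by simp)
    rintro _ ⟨j, hj, rfl⟩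
    simp [hj]
end

section
/- Let G = K_{n,2} be the complete bipartite graph with parts {x₁,…,xₙ} (n ≥ 2) and {y₁,y₂}. Then the matching number of G equals 2, and the ideal ⟨NI(G), y₂⟩ equals ⟨y₂, x₁x₂⋯xₙy₁⟩. -/
open MvPolynomial

variable {V : Type*}

-- matching number part
lemma matching_part (n : ℕ) (hn : 2 ≤ n) :
    (completeBipartiteGraph (Fin n) (Fin 2)).matchingNumber = 2 := by
  set G := completeBipartiteGraph (Fin n) (Fin 2)
  set a0 : Fin n := ⟨0, by omega⟩
  set a1 : Fin n := ⟨1, by omega⟩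
  have h0 : a0 ≠ a1 := by simp [a0, a1, Fin.ext_iff]
  set e1 : Sym2 (Fin n ⊕ Fin 2) := s(Sum.inl a0, Sum.inr 0)
  set e2 : Sym2 (Fin n ⊕ Fin 2) := s(Sum.inl a1, Sum.inr 1)
  have he12 : e1 ≠ e2 := by
    simp [e1, e2, Sym2.eq_iff, h0]
  have hmem2 : 2 ∈ {m | ∃ M : Finset (Sym2 (Fin n ⊕ Fin 2)), G.IsMatchingFinset M ∧ M.card = m} := by
    refine ⟨{e1, e2}, ⟨?_, ?_⟩, ?_⟩
    · intro e he
      simp only [Finset.mem_insert, Finset.mem_singleton] at he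
      rcases he with rfl | rfl <;>
        simp [e1, e2, SimpleGraph.mem_edgeSet, G, completeBipartiteGraph]
    · intro e he f hf hef v hv
      simp only [Finset.mem_insert, Finset.mem_singleton] at he hf
      rcases he with rfl | rfl <;> rcases hf with rfl | rfl <;>
        first
        | exact absurd rfl hef
        | (simp only [e1, e2, Sym2.mem_iff] at hv ⊢
           rcases hv with rfl | rfl <;> push_neg <;>
             exact ⟨by simp [h0, h0.symm], by simp⟩)
    · rw [Finset.card_insert_of_notMem (by simpa using he12), Finset.card_singleton]
  have hub : ∀ m ∈ {m | ∃ M : Finset (Sym2 (Fin n ⊕ Fin 2)), G.IsMatchingFinset M ∧ M.card = m},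
      m ≤ 2 := by
    rintro m ⟨M, ⟨hedge, hdisj⟩, rfl⟩
    have key : ∀ e ∈ M, ∃ j : Fin 2, Sum.inr j ∈ e := by
      intro e he
      have hE := hedge e he
      induction e using Sym2.ind with
      | _ a b =>
        rw [SimpleGraph.mem_edgeSet] at hE
        rcases a with a | a <;> rcases b with b | b
        · simp [G, completeBipartiteGraph] at hE
        · exact ⟨b, by simp⟩
        · exact ⟨a, by simp⟩
        · simp [G, completeBipartiteGraph] at hE
    have : M.card ≤ (Finset.univ : Finset (Fin 2)).card := by
      apply Finset.card_le_card_of_injOn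
        (fun e => if h : ∃ j : Fin 2, Sum.inr j ∈ e then h.choose else 0)
      · intro a _; exact Finset.mem_univ _
      · intro e he f hf hij
        by_contra hef
        simp only at hij
        have he' := key e he
        have hf' := key f hf
        rw [dif_pos he', dif_pos hf'] at hij
        exact hdisj e he f hf hef _ (hij ▸ he'.choose_spec) hf'.choose_spec
    simpa using this
  have hbdd : BddAbove {m | ∃ M : Finset (Sym2 (Fin n ⊕ Fin 2)), G.IsMatchingFinset M ∧ M.card = m} :=
    ⟨2, hub⟩
  exact le_antisymm (csSup_le ⟨2, hmem2⟩ hub) (le_csSup hbdd hmem2)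

lemma ideal_part (K : Type*) [Field K] (n : ℕ) (hn : 2 ≤ n)
    [DecidableRel (completeBipartiteGraph (Fin n) (Fin 2)).Adj] :
    closedNbhdIdeal K (completeBipartiteGraph (Fin n) (Fin 2)) ⊔
        Ideal.span {X (Sum.inr 1)} =
      Ideal.span {(X (Sum.inr 1) : MvPolynomial (Fin n ⊕ Fin 2) K),
        (∏ i : Fin n, X (Sum.inl i)) * X (Sum.inr 0)} := by
  -- neighborhoods
  have hnl : ∀ i : Fin n, (completeBipartiteGraph (Fin n) (Fin 2)).neighborFinset (Sum.inl i) = {Sum.inr 0, Sum.inr 1} := by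
    intro i
    ext v
    rcases v with a | j
    · simp
    · fin_cases j <;> simp
  have hnr : ∀ j : Fin 2, (completeBipartiteGraph (Fin n) (Fin 2)).neighborFinset (Sum.inr j) =
      Finset.univ.image Sum.inl := by
    intro j
    ext v
    rcases v with a | b
    · simp
    · simp
  have hprodl : ∀ i : Fin n, (∏ v ∈ insert (Sum.inl i) ((completeBipartiteGraph (Fin n) (Fin 2)).neighborFinset (Sum.inl i)), (X v : MvPolynomial (Fin n ⊕ Fin 2) K))
      = (X (Sum.inl i) * X (Sum.inr 0)) * X (Sum.inr 1) := by
    intro i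
    rw [hnl i, Finset.prod_insert (by simp), Finset.prod_insert (by simp),
      Finset.prod_singleton, mul_assoc]
  have hprodr : ∀ j : Fin 2, (∏ v ∈ insert (Sum.inr j) ((completeBipartiteGraph (Fin n) (Fin 2)).neighborFinset (Sum.inr j)), (X v : MvPolynomial (Fin n ⊕ Fin 2) K))
      = X (Sum.inr j) * ∏ i : Fin n, X (Sum.inl i) := by
    intro j
    rw [hnr j, Finset.prod_insert (by simp),
      Finset.prod_image (fun a _ b _ h => Sum.inl_injective h)]
  apply le_antisymm
  · apply sup_le
    · rw [closedNbhdIdeal, Ideal.span_le]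
      rintro m ⟨w, rfl⟩
      rcases w with i | j
      · rw [hprodl i]
        exact Ideal.mul_mem_left _ _ (Ideal.subset_span (by simp))
      · rw [hprodr j]
        fin_cases j
        · rw [mul_comm]
          exact Ideal.subset_span (by simp)
        · exact Ideal.mul_mem_right _ _ (Ideal.subset_span (by simp))
    · rw [Ideal.span_le]
      rintro p rfl
      exact Ideal.subset_span (by simp)
  · rw [Ideal.span_le]
    rintro p hp
    rcases hp with rfl | rfl
    · exact le_sup_right (α := Ideal (MvPolynomial (Fin n ⊕ Fin 2) K))
        (Ideal.subset_span rfl)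
    · apply le_sup_left (α := Ideal (MvPolynomial (Fin n ⊕ Fin 2) K))
      rw [closedNbhdIdeal]
      exact Ideal.subset_span ⟨Sum.inr 0, by rw [hprodr 0, mul_comm]⟩


theorem completeBipartite_n2 (K : Type*) [Field K] (n : ℕ) (hn : 2 ≤ n)
    [DecidableRel (completeBipartiteGraph (Fin n) (Fin 2)).Adj] :
    (completeBipartiteGraph (Fin n) (Fin 2)).matchingNumber = 2 ∧
    closedNbhdIdeal K (completeBipartiteGraph (Fin n) (Fin 2)) ⊔
        Ideal.span {X (Sum.inr 1)} =
      Ideal.span {(X (Sum.inr 1) : MvPolynomial (Fin n ⊕ Fin 2) K),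
        (∏ i : Fin n, X (Sum.inl i)) * X (Sum.inr 0)} := by
  exact ⟨matching_part n hn, ideal_part K n hn⟩
end
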